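/- For every dimension d ≥ 3 there exist a d×d complex unitary U and phases θ ∈ ℝ^d, defining the maximally coherent state vector ψ = (1/√d)(e^{iθ_1}, …, e^{iθ_d}), such that (d − 1) − C_{l1}(U ψ ψ† U†) > max over j of C_{l1}(U E_jj U†). That is, in dimension d ≥ 3 the l1 de-cohering power of a unitary can strictly exceed its l1 cohering power, so the qubit inequality C_{l1}(U) ≥ D_{l1}(U) fails in higher dimensions. -/

import Mathlib

open Matrix BigOperators ComplexOrder

/-- The l1-coherence of a matrix: the sum of the absolute values of its
off-diagonal entries. -/
noncomputable def Cl1 {n : ℕ} (A : Matrix (Fin n) (Fin n) ℂ) : ℝ :=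
  ∑ i, ∑ j, if i ≠ j then ‖A i j‖ else 0

/-- A density matrix: positive semidefinite with trace 1. -/
def IsDensity {n : ℕ} (ρ : Matrix (Fin n) (Fin n) ℂ) : Prop :=
  ρ.PosSemidef ∧ ρ.trace = 1

/-- A quantum operation (CPTP map) given by a finite family of Kraus operators. -/
def IsQuantumOp {n : ℕ} (Φ : Matrix (Fin n) (Fin n) ℂ → Matrix (Fin n) (Fin n) ℂ) : Prop :=
  ∃ (m : ℕ) (K : Fin m → Matrix (Fin n) (Fin n) ℂ),
    (∑ i, (K i)ᴴ * K i) = 1 ∧ ∀ ρ, Φ ρ = ∑ i, K i * ρ * (K i)ᴴ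

/-- The dephasing map `Δ`, keeping only the diagonal part of a matrix. -/
def Deph {n : ℕ} (A : Matrix (Fin n) (Fin n) ℂ) : Matrix (Fin n) (Fin n) ℂ :=
  Matrix.of fun i j => if i = j then A i j else 0

/-- The outer product `w w†` of a vector with itself. -/
def outer {n : ℕ} (w : Fin n → ℂ) : Matrix (Fin n) (Fin n) ℂ :=
  Matrix.vecMulVec w (star w)

/-!
Take `U = H ⊕ 1` with `H` the `2 × 2` Hadamard gate, and `θ = 0`. For any vector `v`,
`C_{l1}(v v†) = (∑ |vᵢ|)² - ∑ |vᵢ|²`. Every column of `U` is a basis vector or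
`(1, 1, 0, …, 0)/√2`, so the cohering power of `U` is `1`. But `U` folds the first two
amplitudes of the uniform state into one, `Uψ = (√2, 0, 1, …, 1)/√d`, so its de-cohering power
is at least `d - (√2 + d - 2)²/d = 1 + (3 - 2√2)(d - 2)/d`, which exceeds `1` once `d ≥ 3`.
-/

lemma Cl1_outer {n : ℕ} (v : Fin n → ℂ) :
    Cl1 (outer v) = (∑ i, ‖v i‖) ^ 2 - ∑ i, ‖v i‖ ^ 2 := by
  have hrow : ∀ i, (∑ j, if i ≠ j then ‖outer v i j‖ else 0)
      = ‖v i‖ * ∑ j, ‖v j‖ - ‖v i‖ ^ 2 := by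
    intro i
    rw [← Finset.sum_filter, Finset.filter_ne, Finset.sum_erase_eq_sub (Finset.mem_univ i)]
    simp [outer, vecMulVec_apply, Finset.mul_sum, sq]
  simp only [Cl1, hrow, Finset.sum_sub_distrib, ← Finset.sum_mul, sq]

lemma Cl1_outer_comp_equiv {n : ℕ} {ι : Type*} [Fintype ι] (e : Fin n ≃ ι) (w : ι → ℂ) :
    Cl1 (outer (w ∘ e)) = (∑ k, ‖w k‖) ^ 2 - ∑ k, ‖w k‖ ^ 2 := by
  rw [Cl1_outer]
  simp only [Function.comp_apply, e.sum_comp (fun k => ‖w k‖), e.sum_comp (fun k => ‖w k‖ ^ 2)]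

lemma mul_single_mul_conjTranspose {n : ℕ} (U : Matrix (Fin n) (Fin n) ℂ) (j : Fin n) :
    U * single j j 1 * Uᴴ = outer (fun i => U i j) := by
  ext i k
  simp [outer, vecMulVec_apply, mul_apply, single_apply, ite_and]

lemma conjTranspose_submatrix_mul_self {ι κ : Type*} [Fintype ι] [Fintype κ] [DecidableEq ι]
    [DecidableEq κ] {M : Matrix κ κ ℂ} (hM : Mᴴ * M = 1) (e : ι ≃ κ) :
    (M.submatrix e e)ᴴ * M.submatrix e e = 1 := by
  rw [conjTranspose_submatrix, submatrix_mul_equiv, hM, submatrix_one_equiv]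

lemma ofReal_sqrt_two_sq : (Real.sqrt 2 : ℂ) ^ 2 = 2 := by
  exact_mod_cast Real.sq_sqrt zero_le_two

noncomputable def hadamardGate : Matrix (Fin 2) (Fin 2) ℂ :=
  (Real.sqrt 2 : ℂ)⁻¹ • !![1, 1; 1, -1]

lemma hadamardGate_conjTranspose_mul_self : hadamardGateᴴ * hadamardGate = 1 := by
  ext i j
  fin_cases i <;> fin_cases j <;> simp [hadamardGate, mul_apply, Fin.sum_univ_two] <;>
    field_simp <;> linear_combination -ofReal_sqrt_two_sq

lemma norm_hadamardGate_apply (i j : Fin 2) : ‖hadamardGate i j‖ = (Real.sqrt 2)⁻¹ := by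
  fin_cases i <;> fin_cases j <;> simp [hadamardGate]

lemma hadamardGate_mulVec_const (c : ℂ) :
    hadamardGate *ᵥ (fun _ => c) = ![(Real.sqrt 2 : ℂ) * c, 0] := by
  ext i
  fin_cases i <;> simp [hadamardGate, mulVec, dotProduct, Fin.sum_univ_two]
  field_simp
  linear_combination -c * ofReal_sqrt_two_sq

noncomputable def hadamardBlock (m : ℕ) : Matrix (Fin 2 ⊕ Fin m) (Fin 2 ⊕ Fin m) ℂ :=
  fromBlocks hadamardGate 0 0 1

section

variable {m : ℕ}

lemma hadamardBlock_conjTranspose_mul_self : (hadamardBlock m)ᴴ * hadamardBlock m = 1 := by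
  simp [hadamardBlock, fromBlocks_conjTranspose, fromBlocks_multiply,
    hadamardGate_conjTranspose_mul_self]

lemma hadamardBlock_column_coherence_le_one (k : Fin 2 ⊕ Fin m) :
    (∑ l, ‖hadamardBlock m l k‖) ^ 2 - ∑ l, ‖hadamardBlock m l k‖ ^ 2 ≤ 1 := by
  cases k with
  | inl a =>
    norm_num [hadamardBlock, Fintype.sum_sum_type, norm_hadamardGate_apply, mul_pow]
  | inr b =>
    simp [hadamardBlock, Fintype.sum_sum_type, one_apply, apply_ite norm]

lemma hadamardBlock_mulVec_const (c : ℂ) :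
    hadamardBlock m *ᵥ (fun _ => c) = Sum.elim ![(Real.sqrt 2 : ℂ) * c, 0] (fun _ => c) := by
  rw [hadamardBlock, fromBlocks_mulVec, ← hadamardGate_mulVec_const]
  simp [Function.comp_def]

lemma sum_norm_hadamardBlock_mulVec_const (c : ℂ) :
    ∑ k, ‖(hadamardBlock m *ᵥ fun _ => c) k‖ = (Real.sqrt 2 + m) * ‖c‖ := by
  simp [hadamardBlock_mulVec_const, Fintype.sum_sum_type, abs_of_nonneg (Real.sqrt_nonneg 2)]
  ring

lemma sum_norm_sq_hadamardBlock_mulVec_const (c : ℂ) :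
    ∑ k, ‖(hadamardBlock m *ᵥ fun _ => c) k‖ ^ 2 = (2 + m) * ‖c‖ ^ 2 := by
  simp [hadamardBlock_mulVec_const, Fintype.sum_sum_type, mul_pow]
  ring

end

lemma sqrt_two_add_sq_mul_inv_lt {m : ℝ} (hm : 0 < m) :
    (Real.sqrt 2 + m) ^ 2 * (2 + m)⁻¹ < 1 + m := by
  have h2 : Real.sqrt 2 ^ 2 = 2 := Real.sq_sqrt zero_le_two
  have h32 : Real.sqrt 2 < 3 / 2 := by nlinarith [Real.sqrt_nonneg 2]
  rw [mul_inv_lt_iff₀ (by positivity)]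
  nlinarith

theorem decohering_power_can_exceed_cohering_power_l1_high_dim
    (d : ℕ) (hd : 3 ≤ d) :
    ∃ U : Matrix (Fin d) (Fin d) ℂ, (Uᴴ * U = 1 ∧ U * Uᴴ = 1) ∧
      ∃ θ : Fin d → ℝ,
        ∀ j : Fin d,
          Cl1 (U * Matrix.single j j (1 : ℂ) * Uᴴ) <
            (d - 1 : ℝ) -
              Cl1 (outer (U.mulVec
                (fun k => Complex.exp (θ k * Complex.I) / (Real.sqrt d : ℂ)))) := by
  obtain ⟨m, rfl⟩ : ∃ m, d = 2 + m := ⟨d - 2, by omega⟩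
  set e : Fin (2 + m) ≃ Fin 2 ⊕ Fin m := finSumFinEquiv.symm
  set U := (hadamardBlock m).submatrix e e
  have hU : Uᴴ * U = 1 := conjTranspose_submatrix_mul_self hadamardBlock_conjTranspose_mul_self e
  refine ⟨U, ⟨hU, mul_eq_one_comm.mp hU⟩, 0, fun j => ?_⟩
  have hcoh : Cl1 (U * single j j 1 * Uᴴ) ≤ 1 := by
    rw [mul_single_mul_conjTranspose]
    exact (Cl1_outer_comp_equiv e (fun l => hadamardBlock m l (e j))).trans_le
      (hadamardBlock_column_coherence_le_one _)
  set c : ℂ := 1 / (Real.sqrt (2 + m : ℕ) : ℂ)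
  have hψ : U *ᵥ (fun k => Complex.exp ((0 : Fin (2 + m) → ℝ) k * Complex.I) /
      (Real.sqrt (2 + m : ℕ) : ℂ)) = (hadamardBlock m *ᵥ fun _ => c) ∘ e := by
    simp only [Pi.zero_apply, Complex.ofReal_zero, zero_mul, Complex.exp_zero]
    exact submatrix_mulVec_equiv _ _ _ _
  have hc : ‖c‖ ^ 2 = (2 + m : ℝ)⁻¹ := by
    simp [c, Real.sq_sqrt (by positivity : (0:ℝ) ≤ 2 + m)]
  have hgap := sqrt_two_add_sq_mul_inv_lt (m := m) (by exact_mod_cast (by omega : 0 < m))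
  rw [hψ, Cl1_outer_comp_equiv, sum_norm_hadamardBlock_mulVec_const,
    sum_norm_sq_hadamardBlock_mulVec_const, mul_pow, hc, mul_inv_cancel₀ (by positivity)]
  push_cast
  linarith
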